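/- arXiv:2006.06736 — 4 statements merged into one kernel-verified Lean document; each statement's English description precedes it below -/
import Mathlib

section
/- Let A be a unital complex Banach algebra. An element a ∈ A has a generalized Drazin inverse if and only if there exists b ∈ A commuting with a and m ∈ ℕ such that (ab - (ab)²)^m = 0 and a - a²b is quasinilpotent. -/
/-!
If `x` is a generalized Drazin inverse of `a`, then `a x` is idempotent, so `b = x`, `m = 1` work.
Conversely, `u = a b` is idempotent modulo nilpotents, so in the commutative ring generated by `a`
and `b` there is an idempotent `e` with `u - e` nilpotent. Then `x = b e (1 + (u - e) e)⁻¹`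
satisfies `x = x a x` and `a x = e`, and `a - a² x = (a - a² b) + a (u - e)` differs from the
quasinilpotent `a - a² b` by a commuting nilpotent. Such a perturbation keeps the spectrum inside
`{0}`, and in a complex Banach algebra that characterises quasinilpotence, because Gelfand's
formula gives `r(q y) ≤ r(q) ‖y‖` for commuting `y`.
-/

/-- `q` is quasinilpotent: `1 + q*y` is invertible for every `y` commuting with `q`. -/
def IsQuasinilpotent {A : Type*} [Ring A] (q : A) : Prop :=
  ∀ y : A, q * y = y * q → IsUnit (1 + q * y)

/-- `x` is a generalized Drazin inverse of `a`. -/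
def IsGDrazinInverse {A : Type*} [Ring A] (a x : A) : Prop :=
  x = x * a * x ∧ a * x = x * a ∧ IsQuasinilpotent (a - a * a * x)

open Filter ENNReal

theorem IsQuasinilpotent.spectrum_subset_singleton_zero {𝕜 A : Type*} [Field 𝕜] [Ring A]
    [Algebra 𝕜 A] {q : A} (hq : IsQuasinilpotent q) : spectrum 𝕜 q ⊆ {0} := by
  intro k hk
  by_contra hk0
  have hunit : IsUnit (1 + q * algebraMap 𝕜 A (-k⁻¹)) := hq _ (Algebra.commutes _ _).symm
  have hfactor : algebraMap 𝕜 A k * (1 + q * algebraMap 𝕜 A (-k⁻¹)) = algebraMap 𝕜 A k - q := by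
    rw [mul_add, mul_one, ← mul_assoc, Algebra.commutes, mul_assoc, ← map_mul, mul_neg,
      mul_inv_cancel₀ hk0, map_neg, map_one, mul_neg_one, sub_eq_add_neg]
  exact spectrum.mem_iff.mp hk (hfactor ▸ ((isUnit_iff_ne_zero.mpr hk0).map _).mul hunit)

theorem spectralRadius_eq_zero_iff {𝕜 A : Type*} [NormedField 𝕜] [Ring A] [Algebra 𝕜 A]
    {a : A} : spectralRadius 𝕜 a = 0 ↔ spectrum 𝕜 a ⊆ {0} := by
  simp [spectralRadius, ENNReal.iSup_eq_zero, Set.subset_def]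

section ComplexBanachAlgebra

variable {A : Type*} [NormedRing A] [NormedAlgebra ℂ A] [CompleteSpace A]

theorem Commute.spectralRadius_mul_le {q y : A} (h : Commute q y) :
    spectralRadius ℂ (q * y) ≤ spectralRadius ℂ q * ‖y‖₊ := by
  have hbound : ∀ᶠ n : ℕ in atTop, (‖(q * y) ^ n‖₊ : ℝ≥0∞) ^ (1 / n : ℝ) ≤
      (‖q ^ n‖₊ : ℝ≥0∞) ^ (1 / n : ℝ) * ‖y‖₊ := by
    filter_upwards [eventually_ge_atTop 1] with n hn
    have hnorm : ‖(q * y) ^ n‖₊ ≤ ‖q ^ n‖₊ * ‖y‖₊ ^ n := by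
      rw [h.mul_pow]
      exact (nnnorm_mul_le _ _).trans (mul_le_mul_right (nnnorm_pow_le' y hn) _)
    calc (‖(q * y) ^ n‖₊ : ℝ≥0∞) ^ (1 / n : ℝ)
        ≤ ((‖q ^ n‖₊ : ℝ≥0∞) * (‖y‖₊ : ℝ≥0∞) ^ n) ^ (1 / n : ℝ) := by
          gcongr
          exact_mod_cast hnorm
      _ = (‖q ^ n‖₊ : ℝ≥0∞) ^ (1 / n : ℝ) * ‖y‖₊ := by
          rw [ENNReal.mul_rpow_of_nonneg _ _ (by positivity), ← ENNReal.rpow_natCast,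
            ← ENNReal.rpow_mul, mul_one_div_cancel (by positivity), ENNReal.rpow_one]
  exact le_of_tendsto_of_tendsto
    (spectrum.pow_nnnorm_pow_one_div_tendsto_nhds_spectralRadius (q * y))
    (ENNReal.Tendsto.mul_const (spectrum.pow_nnnorm_pow_one_div_tendsto_nhds_spectralRadius q)
      (.inr coe_ne_top)) hbound

theorem isQuasinilpotent_iff_spectrum_subset_singleton_zero {q : A} :
    IsQuasinilpotent q ↔ spectrum ℂ q ⊆ {0} := by
  refine ⟨IsQuasinilpotent.spectrum_subset_singleton_zero, fun hq y hy => ?_⟩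
  have hradius : spectralRadius ℂ (q * y) < ‖(-1 : ℂ)‖₊ := by
    calc spectralRadius ℂ (q * y) ≤ spectralRadius ℂ q * ‖y‖₊ := Commute.spectralRadius_mul_le hy
      _ = 0 := by rw [spectralRadius_eq_zero_iff.mpr hq, zero_mul]
      _ < ‖(-1 : ℂ)‖₊ := by simp
  have hunit := (spectrum.mem_resolventSet_of_spectralRadius_lt hradius).neg
  rwa [map_neg, map_one, neg_sub, sub_neg_eq_add, add_comm] at hunit

theorem IsQuasinilpotent.of_isNilpotent_sub {p q : A} (hq : IsQuasinilpotent q)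
    (hn : IsNilpotent (p - q)) (h : Commute q p) : IsQuasinilpotent p := by
  rw [isQuasinilpotent_iff_spectrum_subset_singleton_zero] at hq ⊢
  intro k hk
  by_contra hk0
  have hunit : IsUnit (algebraMap ℂ A k - q) := spectrum.notMem_iff.mp fun hkq => hk0 (hq hkq)
  have hcomm : Commute (-(p - q)) (algebraMap ℂ A k - q) :=
    ((Algebra.commute_algebraMap_right k (p - q)).sub_right (h.symm.sub_left (.refl q))).neg_left
  refine spectrum.mem_iff.mp hk ?_
  rw [show algebraMap ℂ A k - p = algebraMap ℂ A k - q + -(p - q) by abel]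
  exact hn.neg.isUnit_add_left_of_commute hunit hcomm

end ComplexBanachAlgebra

section CommRing

variable {R : Type*} [CommRing R]

theorem exists_isIdempotentElem_isNilpotent_sub {u : R} (hu : IsNilpotent (u - u * u)) :
    ∃ e, IsIdempotentElem e ∧ IsNilpotent (u - e) := by
  let f := Ideal.Quotient.mk (nilradical R)
  have hker : ∀ x ∈ RingHom.ker f, IsNilpotent x := fun x hx => by
    rwa [Ideal.mk_ker, mem_nilradical] at hx
  have hidem : IsIdempotentElem (f u) := by
    rw [IsIdempotentElem, ← map_mul, ← sub_eq_zero, ← map_sub, Ideal.Quotient.eq_zero_iff_mem,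
      mem_nilradical, ← neg_sub, isNilpotent_neg_iff]
    exact hu
  obtain ⟨e, he, hfe⟩ := exists_isIdempotentElem_eq_of_ker_isNilpotent f hker _ ⟨u, rfl⟩ hidem
  exact ⟨e, he, by rw [← mem_nilradical, ← Ideal.Quotient.eq]; exact hfe.symm⟩

theorem exists_outer_inverse_mul_eq_of_isNilpotent_mul_sub {a b e : R}
    (he : IsIdempotentElem e) (h : IsNilpotent (a * b - e)) :
    ∃ x, x = x * a * x ∧ a * x = e := by
  obtain ⟨w, hw⟩ := (Commute.all _ _).isNilpotent_mul_right h (y := e) |>.isUnit_one_add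
  have hinv : (w : R) * ↑w⁻¹ = 1 := w.mul_inv
  have hew : e * w = a * b * e := by
    rw [hw]; linear_combination (a * b - e - 1) * he.eq
  have hax : a * (b * e * ↑w⁻¹) = e := by
    linear_combination (-↑w⁻¹ : R) * hew + e * hinv
  refine ⟨b * e * ↑w⁻¹, ?_, hax⟩
  linear_combination (-(b * e * ↑w⁻¹)) * hax - b * ↑w⁻¹ * he.eq

theorem exists_outer_inverse_isNilpotent_sub_of_isNilpotent {a b : R}
    (h : IsNilpotent (a * b - a * b * (a * b))) :
    ∃ x, x = x * a * x ∧ IsNilpotent (a - a * a * x - (a - a * a * b)) := by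
  obtain ⟨e, he, hne⟩ := exists_isIdempotentElem_isNilpotent_sub h
  obtain ⟨x, hx, hax⟩ := exists_outer_inverse_mul_eq_of_isNilpotent_mul_sub he hne
  refine ⟨x, hx, ?_⟩
  rw [show a - a * a * x - (a - a * a * b) = a * (a * b - e) by linear_combination (-a) * hax]
  exact (Commute.all _ _).isNilpotent_mul_left hne

end CommRing

open scoped IsMulCommutative in
theorem Commute.exists_outer_inverse_isNilpotent_sub {A : Type*} [Ring A] {a b : A}
    (hab : Commute a b) (h : IsNilpotent (a * b - a * b * (a * b))) :
    ∃ x, x = x * a * x ∧ Commute a x ∧ Commute (a - a * a * b) (a - a * a * x) ∧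
      IsNilpotent (a - a * a * x - (a - a * a * b)) := by
  let S := Subring.closure ({a, b} : Set A)
  have : IsMulCommutative S := Subring.isMulCommutative_closure (by
    simp only [Set.mem_insert_iff, Set.mem_singleton_iff]
    rintro _ (rfl | rfl) _ (rfl | rfl) <;> first | rfl | exact hab | exact hab.symm)
  let a' : S := ⟨a, Subring.subset_closure (by simp)⟩
  let b' : S := ⟨b, Subring.subset_closure (by simp)⟩
  obtain ⟨x, hx, hn⟩ := exists_outer_inverse_isNilpotent_sub_of_isNilpotent (a := a') (b := b')
    ((IsNilpotent.map_iff (f := S.subtype) Subtype.val_injective).mp h)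
  exact ⟨x, congrArg Subtype.val hx, (Commute.all a' x).map S.subtype,
    (Commute.all (a' - a' * a' * b') (a' - a' * a' * x)).map S.subtype, hn.map S.subtype⟩

theorem gDrazin_iff_exists_comm_nilpotent_part {A : Type*} [NormedRing A]
    [NormedAlgebra ℂ A] [CompleteSpace A] (a : A) :
    (∃ x : A, IsGDrazinInverse a x) ↔
      ∃ (b : A) (m : ℕ), a * b = b * a ∧ (a * b - (a * b) * (a * b)) ^ m = 0 ∧
        IsQuasinilpotent (a - a * a * b) := by
  constructor
  · rintro ⟨x, hxax, hcomm, hq⟩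
    have hidem : a * x * (a * x) = a * x :=
      calc a * x * (a * x) = a * (x * a * x) := by simp only [mul_assoc]
        _ = a * x := by rw [← hxax]
    exact ⟨x, 1, hcomm, by rw [pow_one, hidem, sub_self], hq⟩
  · rintro ⟨b, m, hab, hnil, hq⟩
    obtain ⟨x, hxax, hax, hcomm, hn⟩ :=
      Commute.exists_outer_inverse_isNilpotent_sub hab ⟨m, hnil⟩
    exact ⟨x, hxax, hax, hq.of_isNilpotent_sub hn hcomm⟩
end

section
/- Let A be a unital complex Banach algebra, a ∈ A, and b ∈ A commuting with a such that ab = (ab)² and a - a²b is quasinilpotent. Then a + 1 - ab is invertible and (a + 1 - ab)⁻¹ * (ab) is a generalized Drazin inverse of a. -/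
theorem gDrazin_of_idempotent_ab {A : Type*} [NormedRing A] [NormedAlgebra ℂ A]
    [CompleteSpace A] (a b : A) (hcomm : a * b = b * a)
    (hidem : a * b = (a * b) * (a * b)) (hqnil : IsQuasinilpotent (a - a * a * b)) :
    IsUnit (a + 1 - a * b) ∧
      IsGDrazinInverse a (Ring.inverse (a + 1 - a * b) * (a * b)) := by
  have hba : b * a = a * b := hcomm.symm
  have hc' : ∀ x : A, b * (a * x) = a * (b * x) := fun x => by
    rw [← mul_assoc, hba, mul_assoc]
  have key : a * (a * (b * b)) = a * b := by
    have := hidem.symm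
    simpa [mul_assoc, hc'] using this
  have keyx : ∀ x : A, a * (a * (b * (b * x))) = a * (b * x) := fun x => by
    have := congrArg (· * x) key
    simpa [mul_assoc] using this
  set q : A := a - a * a * b with hq
  have hu1 : IsUnit (1 + q) := by
    have := hqnil 1 (by rw [mul_one, one_mul])
    simpa using this
  set s : A := a * (a * b) + 1 - a * b with hs
  set t : A := b * (a * b) + 1 - a * b with ht
  have hst : s * t = 1 := by
    simp only [hs, ht, mul_add, add_mul, sub_mul, mul_sub, mul_one, one_mul, mul_assoc, hba, hc', key, keyx]
    abel
  have hts : t * s = 1 := by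
    simp only [hs, ht, mul_add, add_mul, sub_mul, mul_sub, mul_one, one_mul, mul_assoc, hba, hc', key, keyx]
    abel
  have hus : IsUnit s := ⟨⟨s, t, hst, hts⟩, rfl⟩
  have hfac : a + 1 - a * b = (1 + q) * s := by
    simp only [hq, hs, mul_add, add_mul, sub_mul, mul_sub, mul_one, one_mul, mul_assoc, hba, hc', key, keyx]
    abel
  have hu : IsUnit (a + 1 - a * b) := by rw [hfac]; exact hu1.mul hus
  have hubp : (a + 1 - a * b) * (b * (a * b)) = a * b := by
    simp only [mul_add, add_mul, sub_mul, mul_sub, mul_one, one_mul, mul_assoc, hba, hc', key, keyx]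
    abel
  have hx : Ring.inverse (a + 1 - a * b) * (a * b) = b * (a * b) := by
    calc Ring.inverse (a + 1 - a * b) * (a * b)
        = Ring.inverse (a + 1 - a * b) * ((a + 1 - a * b) * (b * (a * b))) := by rw [hubp]
      _ = (Ring.inverse (a + 1 - a * b) * (a + 1 - a * b)) * (b * (a * b)) := (mul_assoc _ _ _).symm
      _ = b * (a * b) := by rw [Ring.inverse_mul_cancel _ hu, one_mul]
  refine ⟨hu, ?_, ?_, ?_⟩
  · rw [hx]
    simp only [mul_assoc, hba, hc', key, keyx]
  · rw [hx]
    simp only [mul_assoc, hba, hc', key, keyx]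
  · rw [hx]
    have : a - a * a * (b * (a * b)) = a - a * a * b := by
      simp only [mul_assoc, hba, hc', key, keyx]
    rw [this]; exact hqnil
end

section
/- Let A be a unital complex Banach algebra and a, b, c ∈ A satisfy a(ba)² = abaca = acaba = (ac)²a. Then 1 - ba has a generalized Drazin inverse if and only if 1 - ac has a generalized Drazin inverse. -/
/-!
The argument is purely ring-theoretic. Let `x` be a generalized Drazin inverse of `1 - ac`, with
spectral idempotent `p = 1 - (1 - ac) x`. On the corner `pAp` the element `1 - ac` is
quasinilpotent, so `ac` has an inverse `s` there, and with `d = ab - ac` the element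
`y = 1 + b (x + d - s) a` is a generalized Drazin inverse of `1 - ba`, with spectral idempotent
`b s a`. The hypotheses say that `d a` is killed by `ab` and `ac` on the left and by `ca` on the
right; this forces `d p = 0` and `d x a = d a`, which is all the verification needs beyond the
classical case `c = b`. Quasinilpotence of `(1 - ba) b s a` is reduced to that of
`(1 - ac) p` by the ring version of Cline's formula (`uv` quasinilpotent implies `vu`
quasinilpotent), itself a consequence of Jacobson's lemma for units.
-/

section

variable {R : Type*} [Ring R]

theorem isUnit_one_sub_mul_comm {a b : R} : IsUnit (1 - a * b) ↔ IsUnit (1 - b * a) := by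
  simpa [spectrum.mem_iff] using
    (spectrum.unit_mem_mul_comm (R := ℤ) (a := a) (b := b) (r := 1)).not

namespace IsQuasinilpotent

theorem isUnit_one_sub {q : R} (hq : IsQuasinilpotent q) : IsUnit (1 - q) := by
  simpa [sub_eq_add_neg] using hq (-1) (by simp)

/-- If `y` commutes with `b * a`, then `a * y * y * b` commutes with `a * b`, and Jacobson's lemma
turns the unit `1 - a * b * (a * y * y * b)` into the unit `1 - (b * a * y) ^ 2`. -/
theorem mul_comm {a b : R} (h : IsQuasinilpotent (a * b)) : IsQuasinilpotent (b * a) := by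
  intro y hy
  have hcomm : a * b * -(a * y * y * b) = -(a * y * y * b) * (a * b) := by
    linear_combination (norm := noncomm_ring) -(a * hy * y * b) - a * y * hy * b
  have hsq : IsUnit (1 - (a * y * b * a * y) * b) := by
    have e : (a * y * b * a * y) * b = a * b * (a * y * y * b) := by
      linear_combination (norm := noncomm_ring) -(a * hy * y * b)
    simpa [e, sub_eq_add_neg] using h _ hcomm
  have hprod : IsUnit ((1 + b * a * y) * (1 - b * a * y)) := by
    convert isUnit_one_sub_mul_comm.mpr hsq using 1
    noncomm_ring
  have hfactors : Commute (1 + b * a * y) (1 - b * a * y) := by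
    simp only [Commute, SemiconjBy]
    noncomm_ring
  exact (hfactors.isUnit_mul_iff.mp hprod).1

end IsQuasinilpotent

namespace IsGDrazinInverse

variable {β x : R}

theorem isIdempotentElem_one_sub_mul (h : IsGDrazinInverse β x) :
    IsIdempotentElem (1 - β * x) :=
  IsIdempotentElem.one_sub (by rw [IsIdempotentElem, mul_assoc, ← mul_assoc x, ← h.1])

theorem commute_one_sub_mul (h : IsGDrazinInverse β x) : Commute β (1 - β * x) :=
  (Commute.one_right β).sub_right ((Commute.refl β).mul_right h.2.1)

theorem one_sub_mul_mul_eq_zero (h : IsGDrazinInverse β x) : (1 - β * x) * x = 0 := by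
  rw [sub_mul, one_mul, h.2.1, ← h.1, sub_self]

theorem isQuasinilpotent_mul_one_sub (h : IsGDrazinInverse β x) :
    IsQuasinilpotent (β * (1 - β * x)) := by
  convert h.2.2 using 1
  noncomm_ring

theorem of_mul_eq_one_sub {y P : R} (h₁ : β * y = 1 - P) (h₂ : y * β = 1 - P) (hP : P * y = 0)
    (hq : IsQuasinilpotent (β * P)) : IsGDrazinInverse β y := by
  refine ⟨?_, h₁.trans h₂.symm, ?_⟩
  · rw [h₂, sub_mul, one_mul, hP, sub_zero]
  · rwa [mul_assoc, h₁, mul_sub, mul_one, sub_sub_cancel]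

/-- The witness is `(1 - (1 - m) p)⁻¹ p`, where `p = 1 - (1 - m) x`: the unit exists because
`(1 - m) p` is quasinilpotent, and it agrees with `m` on `p`. -/
theorem exists_corner_inverse {m : R} (h : IsGDrazinInverse (1 - m) x) :
    ∃ s, (1 - (1 - m) * x) * s = s ∧ m * s = 1 - (1 - m) * x ∧ s * m = 1 - (1 - m) * x := by
  obtain ⟨p, hp⟩ : ∃ p, 1 - (1 - m) * x = p := ⟨_, rfl⟩
  have hpp : p * p = p := hp ▸ h.isIdempotentElem_one_sub_mul
  have hmp : Commute m p := by
    have := (Commute.one_left p).sub_left (hp ▸ h.commute_one_sub_mul)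
    rwa [sub_sub_cancel] at this
  have hq := h.isQuasinilpotent_mul_one_sub
  rw [hp] at hq
  obtain ⟨u, hu⟩ := hq.isUnit_one_sub
  have hup : ↑u * p = m * p := by
    rw [hu]
    linear_combination (norm := noncomm_ring) (m - 1) * hpp
  have hmu : Commute m ↑u := by
    rw [hu]
    exact (Commute.one_right m).sub_right
      (((Commute.one_right m).sub_right (Commute.refl m)).mul_right hmp)
  have hpu : Commute p ↑u := by
    rw [hu]
    exact (Commute.one_right p).sub_right
      (((Commute.one_right p).sub_right hmp.symm).mul_right (Commute.refl p))
  refine hp ▸ ⟨↑u⁻¹ * p, ?_, ?_, ?_⟩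
  · rw [← mul_assoc, hpu.units_inv_right.eq, mul_assoc, hpp]
  · rw [← mul_assoc, hmu.units_inv_right.eq, mul_assoc, ← hup, ← mul_assoc, Units.inv_mul,
      one_mul]
  · rw [mul_assoc, ← hmp.eq, ← hup, ← mul_assoc, Units.inv_mul, one_mul]

end IsGDrazinInverse

section Jacobson

variable {a b c d p s x : R}

/-- `(1 - b a) b s a = b ((1 - a c) s a)`, and `((1 - a c) s a) b = q (1 + s d)` with
`q = (1 - a c) p` and `(1 + s d) q = q`, so Cline's formula applies twice. -/
theorem isQuasinilpotent_one_sub_mul_mul_of_corner (hq : IsQuasinilpotent ((1 - a * c) * p))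
    (hd : a * b - a * c = d) (hps : p * s = s) (hsm : s * (a * c) = p) (hds : d * s = 0)
    (hdq : d * ((1 - a * c) * p) = 0) : IsQuasinilpotent ((1 - b * a) * (b * s * a)) := by
  have hswap : (1 - b * a) * (b * s * a) = b * ((1 - a * c) * s * a) := by
    linear_combination (norm := noncomm_ring) -b * hds * a - b * hd * s * a
  have hcomm : ((1 - a * c) * s * a) * b = (1 - a * c) * p * (1 + s * d) := by
    linear_combination (norm := noncomm_ring)
      (1 - a * c) * hsm - (1 - a * c) * hps * d + (1 - a * c) * s * hd
  have hfix : (1 + s * d) * ((1 - a * c) * p) = (1 - a * c) * p := by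
    linear_combination (norm := noncomm_ring) s * hdq
  rw [hswap]
  refine IsQuasinilpotent.mul_comm ?_
  rw [hcomm]
  exact IsQuasinilpotent.mul_comm (hfix.symm ▸ hq)

theorem IsGDrazinInverse.one_sub_mul_of_corner
    (h1 : a * b * a * b * a = a * b * a * c * a)
    (h2 : a * b * a * c * a = a * c * a * b * a)
    (h3 : a * c * a * b * a = a * c * a * c * a)
    (hx : IsGDrazinInverse (1 - a * c) x) (hp : 1 - (1 - a * c) * x = p)
    (hd : a * b - a * c = d) (hps : p * s = s) (hms : a * c * s = p) (hsm : s * (a * c) = p) :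
    IsGDrazinInverse (1 - b * a) (1 + b * (x + d - s) * a) := by
  have hpx : p * x = 0 := hp ▸ hx.one_sub_mul_mul_eq_zero
  have hmul_x : (1 - a * c) * x = 1 - p := by rw [← hp, sub_sub_cancel]
  have hx_mul : x * (1 - a * c) = 1 - p := by rw [← hx.2.1, hmul_x]
  have hab_da : a * b * (d * a) = 0 := by
    rw [← hd]; linear_combination (norm := noncomm_ring) h1
  have hac_da : a * c * (d * a) = 0 := by
    rw [← hd]; linear_combination (norm := noncomm_ring) h3
  have hda_ca : d * a * (c * a) = 0 := by
    rw [← hd]; linear_combination (norm := noncomm_ring) h2 + h3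
  have hp_da : p * (d * a) = 0 := by rw [← hsm, mul_assoc, hac_da, mul_zero]
  have hdac_p : d * a * c * p = 0 := by
    rw [← hms]; linear_combination (norm := noncomm_ring) hda_ca * c * s
  have hdp : d * p = 0 := by
    linear_combination (norm := noncomm_ring) hdac_p * s - d * hms - d * a * c * hps
  have hds : d * s = 0 := by rw [← hps, ← mul_assoc, hdp, zero_mul]
  have hx_da : x * (d * a) = d * a := by
    linear_combination (norm := noncomm_ring) x * hac_da + hx_mul * (d * a) - hp_da
  have hdac_x : d * a * c * x = d * a * c := by
    linear_combination (norm := noncomm_ring) hda_ca * c * x + d * a * c * hmul_x - hdac_p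
  have hdxa : d * x * a = d * a := by
    linear_combination (norm := noncomm_ring) hda_ca + hdac_x * a + d * hmul_x * a - hdp * a
  have hd_da : d * (d * a) = 0 := by
    linear_combination (norm := noncomm_ring) hab_da - hac_da - hd * (d * a)
  have hs_da : s * (d * a) = 0 := by
    linear_combination (norm := noncomm_ring)
      s * hp_da + s * hms * (d * a) - hsm * s * (d * a) - hps * (d * a)
  refine of_mul_eq_one_sub (P := b * s * a) ?_ ?_ ?_ ?_
  · linear_combination (norm := noncomm_ring) b * hmul_x * a - b * hdxa - b * hac_da - b * hd_da +
      b * hms * a + b * hds * a - b * hd * (x + d - s) * a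
  · linear_combination (norm := noncomm_ring) b * hx_mul * a - b * hda_ca - b * hx_da - b * hd_da +
      b * hsm * a + b * hs_da - b * (x + d - s) * hd * a
  · linear_combination (norm := noncomm_ring) b * hsm * (x + d - s) * a + b * hpx * a + b * hp_da -
      b * hps * a + b * hs_da + b * s * hdxa + b * s * hd_da - b * s * hds * a +
      b * s * hd * (x + d - s) * a
  · exact isQuasinilpotent_one_sub_mul_mul_of_corner (hp ▸ hx.isQuasinilpotent_mul_one_sub) hd
      hps hsm hds (by linear_combination (norm := noncomm_ring) hdp - hdac_p)

theorem exists_isGDrazinInverse_one_sub_mul_of_one_sub_mul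
    (h1 : a * b * a * b * a = a * b * a * c * a)
    (h2 : a * b * a * c * a = a * c * a * b * a)
    (h3 : a * c * a * b * a = a * c * a * c * a)
    (hx : IsGDrazinInverse (1 - a * c) x) : ∃ y, IsGDrazinInverse (1 - b * a) y := by
  obtain ⟨s, hps, hms, hsm⟩ := hx.exists_corner_inverse
  exact ⟨_, hx.one_sub_mul_of_corner h1 h2 h3 rfl rfl hps hms hsm⟩

end Jacobson

end

theorem generalized_jacobson_gDrazin_general {A : Type*} [NormedRing A] (a b c : A)
    (h1 : a * b * a * b * a = a * b * a * c * a)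
    (h2 : a * b * a * c * a = a * c * a * b * a)
    (h3 : a * c * a * b * a = a * c * a * c * a) :
    (∃ x : A, IsGDrazinInverse (1 - b * a) x) ↔
      (∃ x : A, IsGDrazinInverse (1 - a * c) x) := by
  refine ⟨fun ⟨x, hx⟩ => ?_, fun ⟨x, hx⟩ =>
    exists_isGDrazinInverse_one_sub_mul_of_one_sub_mul h1 h2 h3 hx⟩
  -- `1 - ba → 1 - ab → 1 - ca → 1 - ac`; the outer steps are the case `c = b`.
  obtain ⟨x₁, hx₁⟩ := exists_isGDrazinInverse_one_sub_mul_of_one_sub_mul rfl rfl rfl hx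
  obtain ⟨x₂, hx₂⟩ :=
    exists_isGDrazinInverse_one_sub_mul_of_one_sub_mul h3.symm h2.symm h1.symm hx₁
  exact exists_isGDrazinInverse_one_sub_mul_of_one_sub_mul rfl rfl rfl hx₂

theorem generalized_jacobson_gDrazin {A : Type*} [NormedRing A] [NormedAlgebra ℂ A]
    [CompleteSpace A] (a b c : A)
    (h1 : a * b * a * b * a = a * b * a * c * a)
    (h2 : a * b * a * c * a = a * c * a * b * a)
    (h3 : a * c * a * b * a = a * c * a * c * a) :
    (∃ x : A, IsGDrazinInverse (1 - b * a) x) ↔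
      (∃ x : A, IsGDrazinInverse (1 - a * c) x) :=
  generalized_jacobson_gDrazin_general a b c h1 h2 h3
end

section
/- Let A be a unital ring, m ∈ ℕ with m ≥ 1, and e ∈ A be an element such that (e - e²)^m = 0 (i.e., e^m(1-e)^m = 0). Define f = Σ_{i=0}^{m-1} C(2m, i) e^{2m-i}(1-e)^i. Then f is an idempotent commuting with e, and e - f is nilpotent with (e - f)^m = 0. -/
/-!
Split the binomial expansion `1 = (X + (1 - X)) ^ (2m)` in `R[X]` into `L`, the terms with
`X`-exponent above `m`, and `U`, the remaining ones. Then `X ^ m ∣ L`, `(1 - X) ^ m ∣ U` and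
`L + U = 1`, so `L * L - L = -(L * U)` is a multiple of `(X * (1 - X)) ^ m`, and for `m ≥ 1`
`X - L = X * U - (1 - X) * L` is a multiple of `X * (1 - X)`. Evaluating at `e` kills every
multiple of `(X * (1 - X)) ^ m`, and `f`, being a polynomial in `e`, commutes with `e`.
-/

open Polynomial Finset

namespace Polynomial

variable (R : Type*) [CommRing R] (m : ℕ)

noncomputable def binomialLowerPart : R[X] :=
  ∑ i ∈ range m, ((2 * m).choose i : R[X]) * X ^ (2 * m - i) * (1 - X) ^ i

noncomputable def binomialUpperPart : R[X] :=
  ∑ i ∈ Ico m (2 * m + 1), ((2 * m).choose i : R[X]) * X ^ (2 * m - i) * (1 - X) ^ i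

theorem binomialLowerPart_add_binomialUpperPart :
    binomialLowerPart R m + binomialUpperPart R m = 1 := by
  have expansion : (1 : R[X]) = ∑ i ∈ range (2 * m + 1),
      ((2 * m).choose i : R[X]) * X ^ (2 * m - i) * (1 - X) ^ i := by
    have h := add_pow (1 - X : R[X]) X (2 * m)
    rw [sub_add_cancel, one_pow] at h
    exact h.trans (sum_congr rfl fun i _ => by ring)
  rw [expansion, binomialLowerPart, binomialUpperPart, sum_range_add_sum_Ico _ (by omega)]

variable {R m}

theorem X_pow_dvd_binomialLowerPart : (X : R[X]) ^ m ∣ binomialLowerPart R m :=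
  dvd_sum fun i hi =>
    ((pow_dvd_pow X (by rw [mem_range] at hi; omega)).mul_left _).mul_right _

theorem one_sub_X_pow_dvd_binomialUpperPart :
    (1 - X : R[X]) ^ m ∣ binomialUpperPart R m :=
  dvd_sum fun _ hi => (pow_dvd_pow _ (mem_Ico.mp hi).1).mul_left _

theorem X_mul_one_sub_X_pow_dvd_binomialLowerPart_mul_self_sub :
    (X * (1 - X) : R[X]) ^ m ∣
      binomialLowerPart R m * binomialLowerPart R m - binomialLowerPart R m := by
  set L := binomialLowerPart R m
  have hsplit : L * L - L = -(L * binomialUpperPart R m) := by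
    linear_combination L * binomialLowerPart_add_binomialUpperPart R m
  rw [hsplit, dvd_neg, mul_pow]
  exact mul_dvd_mul X_pow_dvd_binomialLowerPart one_sub_X_pow_dvd_binomialUpperPart

theorem X_mul_one_sub_X_pow_dvd_X_sub_binomialLowerPart_pow :
    (X * (1 - X) : R[X]) ^ m ∣ (X - binomialLowerPart R m) ^ m := by
  rcases Nat.eq_zero_or_pos m with rfl | hm
  · simp
  refine pow_dvd_pow_of_dvd ?_ m
  have hLU := binomialLowerPart_add_binomialUpperPart R m
  obtain ⟨q, hq⟩ := (dvd_pow_self X hm.ne').trans (X_pow_dvd_binomialLowerPart (R := R))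
  obtain ⟨r, hr⟩ := (dvd_pow_self (1 - X) hm.ne').trans
    (one_sub_X_pow_dvd_binomialUpperPart (R := R))
  exact ⟨r - q, by linear_combination (X - 1 : R[X]) * hq + X * hr - X * hLU⟩

end Polynomial

theorem aeval_eq_zero_of_X_mul_one_sub_X_pow_dvd {R A : Type*} [CommRing R] [Ring A]
    [Algebra R A] {m : ℕ} {e : A} (h : (e - e * e) ^ m = 0) {p : R[X]}
    (hp : (X * (1 - X) : R[X]) ^ m ∣ p) :
    aeval e p = 0 :=
  aeval_eq_zero_of_dvd_aeval_eq_zero hp (by simpa [mul_sub] using h)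

theorem idempotent_from_binomial_general {A : Type*} [Ring A] (m : ℕ) (e : A)
    (h : (e - e * e) ^ m = 0) :
    let f : A := ∑ i ∈ Finset.range m,
      ((2 * m).choose i : A) * e ^ (2 * m - i) * (1 - e) ^ i
    f * f = f ∧ e * f = f * e ∧ (e - f) ^ m = 0 := by
  intro f
  have hf : aeval e (binomialLowerPart ℤ m) = f := by
    simp [binomialLowerPart, f]
  refine ⟨?_, ?_, ?_⟩
  · rw [← sub_eq_zero, ← hf, ← map_mul, ← map_sub]
    exact aeval_eq_zero_of_X_mul_one_sub_X_pow_dvd h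
      X_mul_one_sub_X_pow_dvd_binomialLowerPart_mul_self_sub
  · simpa only [hf, map_mul, aeval_X] using
      congrArg (aeval e) (mul_comm X (binomialLowerPart ℤ m))
  · have hef : e - f = aeval e (X - binomialLowerPart ℤ m) := by rw [map_sub, aeval_X, hf]
    rw [hef, ← map_pow]
    exact aeval_eq_zero_of_X_mul_one_sub_X_pow_dvd h
      X_mul_one_sub_X_pow_dvd_X_sub_binomialLowerPart_pow

theorem idempotent_from_binomial {A : Type*} [Ring A] (m : ℕ) (hm : 1 ≤ m) (e : A)
    (h : (e - e * e) ^ m = 0) :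
    let f : A := ∑ i ∈ Finset.range m,
      ((2 * m).choose i : A) * e ^ (2 * m - i) * (1 - e) ^ i
    f * f = f ∧ e * f = f * e ∧ (e - f) ^ m = 0 :=
  idempotent_from_binomial_general m e h
end
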